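/- Let X be a connected simple graph with vertex set V and graph distance d, and let q assign to every ordered pair (x,y) of vertices a rational 1-chain q(x,y) on X such that ∂q(x,y) = 𝟙_y − 𝟙_x for all x,y, and such that there is a constant δ₁ ≥ 0 for which, for every geodesic γ from x to y, every unoriented edge {u,v} with q(x,y)(u,v) ≠ 0 lies within distance δ₁ of some vertex of γ. Set ρ = 2δ₁ + 1. Then for all x ≠ y in V and every vertex z with d(x,z) + d(z,y) = d(x,y), the restriction of q(x,y) to the edges lying within distance ρ of z has ℓ1-norm at least 1; that is, Σ |q(x,y)(u,v)| ≥ 1, where the sum ranges over unoriented edges {u,v} with d(u,z) ≤ ρ and d(v,z) ≤ ρ. -/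

import Mathlib

/-!
Let `k = min (d(x,z), d(x,y) - 1)` and let `S` be the ball of radius `k` about `x`. Since
`∂q(x,y) = 𝟙_y - 𝟙_x` and the pairs inside `S` cancel by antisymmetry, the flux of `q(x,y)` into
`S` is `-1`; so the pairs `(u,v)` entering `S` carry ℓ1-mass at least `1`, and their reversals,
which leave `S`, carry the same mass again. For such a pair `d(x,v) ≤ k < d(x,u)`, and a vertex `w`
of a geodesic through `z` that is `δ₁`-close to both `u` and `v` is pinned within `δ₁` of `z`
because `k ≤ d(x,z) ≤ k + 1`; hence `u` and `v` lie within `2δ₁` of `z`.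
-/

open scoped Classical

/-- A rational 1-chain on a simple graph `X`: a finitely supported antisymmetric
function on ordered pairs of adjacent vertices. -/
structure OneChain {V : Type*} (X : SimpleGraph V) where
  val : V → V → ℚ
  antisymm : ∀ u v, val u v = - val v u
  adj_support : ∀ u v, ¬ X.Adj u v → val u v = 0
  finite_support : {p : V × V | val p.1 p.2 ≠ 0}.Finite

namespace OneChain

variable {V : Type*} {X : SimpleGraph V}

/-- The boundary of a 1-chain: `∂a(v) = Σ_{u adjacent to v} a(u,v)`. -/
noncomputable def boundary (a : OneChain X) (v : V) : ℚ :=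
  ∑ᶠ u, a.val u v

/-- The ℓ1-norm of a 1-chain, with one term per unoriented edge. -/
noncomputable def l1 (a : OneChain X) : ℚ :=
  (∑ᶠ p : V × V, |a.val p.1 p.2|) / 2

/-- Pointwise sum of two 1-chains. -/
def add (a b : OneChain X) : OneChain X where
  val u v := a.val u v + b.val u v
  antisymm u v := by (try simp only []); rw [a.antisymm u v, b.antisymm u v]; ring
  adj_support u v h := by (try simp only []); rw [a.adj_support u v h, b.adj_support u v h]; ring
  finite_support := by
    apply (a.finite_support.union b.finite_support).subset
    intro p hp
    by_contra h
    simp only [Set.mem_union, Set.mem_setOf_eq, not_or, not_not] at h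
    exact hp (by simp [h.1, h.2])

end OneChain

namespace SimpleGraph

variable {V : Type*} {G : SimpleGraph V}

lemma Walk.dist_add_dist_of_mem_support {x y w : V} {p : G.Walk x y}
    (hp : p.length = G.dist x y) (hw : w ∈ p.support) :
    G.dist x w + G.dist w y = G.dist x y := by
  rw [← length_eq_dist_of_subwalk hp (p.isSubwalk_takeUntil hw),
    ← length_eq_dist_of_subwalk hp (p.isSubwalk_dropUntil hw), ← Walk.length_append,
    p.take_spec hw, hp]

lemma Connected.exists_geodesic_through (hconn : G.Connected) {x y z : V}
    (hz : G.dist x z + G.dist z y = G.dist x y) :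
    ∃ γ : G.Walk x y, γ.length = G.dist x y ∧ ∀ w ∈ γ.support,
      G.dist x w + G.dist w z = G.dist x z ∨ G.dist x z + G.dist z w = G.dist x w := by
  obtain ⟨p, hp⟩ := hconn.exists_walk_length_eq_dist x z
  obtain ⟨q, hq⟩ := hconn.exists_walk_length_eq_dist z y
  refine ⟨p.append q, by rw [Walk.length_append, hp, hq, hz], fun w hw => ?_⟩
  rcases (Walk.mem_support_append_iff _ _).1 hw with hw | hw
  · exact .inl (Walk.dist_add_dist_of_mem_support hp hw)
  · have hzw := Walk.dist_add_dist_of_mem_support hq hw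
    have hxy : G.dist x y ≤ G.dist x w + G.dist w y := hconn.dist_triangle
    have hxw : G.dist x w ≤ G.dist x z + G.dist z w := hconn.dist_triangle
    exact .inr (by omega)

lemma dist_le_two_mul_of_crossing (hconn : G.Connected) {x z w u v : V} {k : ℕ} {δ : ℝ}
    (hw : G.dist x w + G.dist w z = G.dist x z ∨ G.dist x z + G.dist z w = G.dist x w)
    (hkz : k ≤ G.dist x z) (hzk : G.dist x z ≤ k + 1) (hu : k < G.dist x u)
    (hv : G.dist x v ≤ k) (huw : (G.dist u w : ℝ) ≤ δ) (hvw : (G.dist v w : ℝ) ≤ δ) :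
    (G.dist u z : ℝ) ≤ 2 * δ ∧ (G.dist v z : ℝ) ≤ 2 * δ := by
  have hxu : G.dist x u ≤ G.dist x w + G.dist w u := hconn.dist_triangle
  have hxw : G.dist x w ≤ G.dist x v + G.dist v w := hconn.dist_triangle
  have hwz : (G.dist w z : ℝ) ≤ δ := by
    rw [dist_comm (u := w) (v := u)] at hxu
    rcases hw with hw | hw
    · have : G.dist w z ≤ G.dist u w := by omega
      exact le_trans (by exact_mod_cast this) huw
    · have : G.dist w z ≤ G.dist v w := by rw [dist_comm (u := z)] at hw; omega
      exact le_trans (by exact_mod_cast this) hvw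
  have huz : (G.dist u z : ℝ) ≤ G.dist u w + G.dist w z := mod_cast hconn.dist_triangle
  have hvz : (G.dist v z : ℝ) ≤ G.dist v w + G.dist w z := mod_cast hconn.dist_triangle
  exact ⟨by linarith, by linarith⟩

end SimpleGraph

namespace OneChain

variable {V : Type*} {X : SimpleGraph V} (a : OneChain X)

noncomputable def support : Finset (V × V) := a.finite_support.toFinset

lemma mem_support {p : V × V} : p ∈ a.support ↔ a.val p.1 p.2 ≠ 0 :=
  Set.Finite.mem_toFinset _

lemma val_swap (u v : V) : a.val v u = -a.val u v := by
  rw [a.antisymm u v, neg_neg]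

lemma swap_mem_support {p : V × V} : p.swap ∈ a.support ↔ p ∈ a.support := by
  simp [mem_support, a.val_swap p.1]

noncomputable def cut (S : Set V) : Finset (V × V) := {p ∈ a.support | p.1 ∉ S ∧ p.2 ∈ S}

lemma mem_cut {S : Set V} {p : V × V} :
    p ∈ a.cut S ↔ p ∈ a.support ∧ p.1 ∉ S ∧ p.2 ∈ S :=
  Finset.mem_filter

lemma swap_mem_cut {S : Set V} {p : V × V} : p.swap ∈ a.cut S ↔ p ∈ a.cut Sᶜ := by
  simp only [mem_cut, swap_mem_support, Prod.fst_swap, Prod.snd_swap, Set.mem_compl_iff,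
    not_not]
  tauto

lemma boundary_eq_sum [DecidableEq V] (v : V) :
    a.boundary v = ∑ p ∈ a.support with p.2 = v, a.val p.1 p.2 := by
  rw [boundary, finsum_eq_sum_of_support_subset (s := {p ∈ a.support | p.2 = v}.image Prod.fst),
    Finset.sum_image]
  · exact Finset.sum_congr rfl fun p hp => by rw [(Finset.mem_filter.1 hp).2]
  · intro p hp q hq h
    exact Prod.ext h ((Finset.mem_filter.1 hp).2.trans (Finset.mem_filter.1 hq).2.symm)
  · intro u hu
    exact Finset.mem_image.2 ⟨(u, v), Finset.mem_filter.2 ⟨a.mem_support.2 hu, rfl⟩, rfl⟩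

lemma val_self (u : V) : a.val u u = 0 := by
  linarith [a.antisymm u u]

lemma sum_inner_eq_zero (S : Set V) :
    ∑ p ∈ a.support with p.1 ∈ S ∧ p.2 ∈ S, a.val p.1 p.2 = 0 := by
  refine Finset.sum_involution (fun p _ => p.swap) (fun p _ => by simp [a.val_swap p.1])
    (fun p _ hp h => hp ?_) (fun p hp => ?_) (fun p _ => rfl)
  · rw [Prod.ext_iff] at h
    simp only [Prod.fst_swap, Prod.snd_swap] at h
    rw [h.2, a.val_self]
  · simp only [Finset.mem_filter, swap_mem_support, Prod.fst_swap, Prod.snd_swap] at hp ⊢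
    tauto

lemma sum_boundary_eq_sum_cut [DecidableEq V] (S : Set V) :
    ∑ v ∈ a.support.image Prod.snd with v ∈ S, a.boundary v = ∑ p ∈ a.cut S, a.val p.1 p.2 := by
  simp_rw [boundary_eq_sum]
  rw [Finset.sum_fiberwise_eq_sum_filter, ← zero_add (∑ p ∈ a.cut S, a.val p.1 p.2),
    ← a.sum_inner_eq_zero S, cut]
  simp only [Finset.sum_filter, ← Finset.sum_add_distrib]
  refine Finset.sum_congr rfl fun p hp => ?_
  have hp₂ : p.2 ∈ a.support.image Prod.snd := Finset.mem_image_of_mem _ hp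
  by_cases h₁ : p.1 ∈ S <;> by_cases h₂ : p.2 ∈ S <;> simp [h₁, h₂, hp₂]

lemma mem_image_snd_of_boundary_ne_zero [DecidableEq V] {v : V} (h : a.boundary v ≠ 0) :
    v ∈ a.support.image Prod.snd := by
  rw [boundary_eq_sum] at h
  obtain ⟨p, hp, -⟩ := Finset.exists_ne_zero_of_sum_ne_zero h
  exact Finset.mem_image.2 ⟨p, (Finset.mem_filter.1 hp).1, (Finset.mem_filter.1 hp).2⟩

lemma one_le_sum_abs_cut {x y : V} {S : Set V}
    (hb : ∀ v, a.boundary v = (if v = y then (1 : ℚ) else 0) - (if v = x then (1 : ℚ) else 0))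
    (hxy : x ≠ y) (hx : x ∈ S) (hy : y ∉ S) :
    1 ≤ ∑ p ∈ a.cut S, |a.val p.1 p.2| := by
  have hx' : x ∈ a.support.image Prod.snd :=
    a.mem_image_snd_of_boundary_ne_zero (by simp [hb, hxy])
  have flux : ∑ p ∈ a.cut S, a.val p.1 p.2 = -1 := by
    rw [← sum_boundary_eq_sum_cut, Finset.sum_congr rfl fun v _ => hb v, Finset.sum_sub_distrib,
      Finset.sum_ite_eq', Finset.sum_ite_eq']
    simp [hx', hx, hy]
  simpa [flux] using Finset.abs_sum_le_sum_abs (fun p => a.val p.1 p.2) (a.cut S)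

lemma two_mul_sum_abs_cut_le (S : Set V) (E : V → Prop) [DecidablePred E]
    (hE : ∀ p ∈ a.cut S, E p.1 ∧ E p.2) :
    2 * ∑ p ∈ a.cut S, |a.val p.1 p.2| ≤
      ∑ᶠ p : V × V, if E p.1 ∧ E p.2 then |a.val p.1 p.2| else 0 := by
  set f : V × V → ℚ := fun p => if E p.1 ∧ E p.2 then |a.val p.1 p.2| else 0
  have hf : ∀ p ∈ a.cut S, f p = |a.val p.1 p.2| := fun p hp => if_pos (hE p hp)
  have hf' : ∀ p ∈ a.cut Sᶜ, f p = |a.val p.1 p.2| := fun p hp =>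
    if_pos (hE p.swap (a.swap_mem_cut.2 hp)).symm
  have hcompl : ∑ p ∈ a.cut Sᶜ, |a.val p.1 p.2| = ∑ p ∈ a.cut S, |a.val p.1 p.2| :=
    Finset.sum_nbij' Prod.swap Prod.swap (fun _ hp => a.swap_mem_cut.2 hp)
      (fun _ hp => a.swap_mem_cut.1 hp) (fun _ _ => rfl) (fun _ _ => rfl)
      (fun p _ => by rw [Prod.snd_swap, Prod.fst_swap, a.val_swap, abs_neg])
  have hdisj : Disjoint (a.cut S) (a.cut Sᶜ) := Finset.disjoint_left.2 fun p h h' =>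
    (a.mem_cut.1 h').2.2 (a.mem_cut.1 h).2.2
  calc 2 * ∑ p ∈ a.cut S, |a.val p.1 p.2|
      = ∑ p ∈ a.cut S, f p + ∑ p ∈ a.cut Sᶜ, f p := by
        rw [Finset.sum_congr rfl hf, Finset.sum_congr rfl hf', hcompl, two_mul]
    _ = ∑ p ∈ a.cut S ∪ a.cut Sᶜ, f p := (Finset.sum_union hdisj).symm
    _ ≤ ∑ p ∈ a.support, f p :=
        Finset.sum_le_sum_of_subset_of_nonneg
          (Finset.union_subset (fun p hp => (a.mem_cut.1 hp).1) (fun p hp => (a.mem_cut.1 hp).1))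
          fun p _ _ => by simp only [f]; split_ifs <;> positivity
    _ = ∑ᶠ p, f p := (finsum_eq_sum_of_support_subset f fun p hp =>
        a.mem_support.2 fun h0 => hp (by simp [f, h0])).symm

end OneChain

theorem restricted_l1_ge_one_general {V : Type*} (X : SimpleGraph V) (hconn : X.Connected)
    (q : V → V → OneChain X)
    (hbdry : ∀ x y v, (q x y).boundary v =
      (if v = y then (1 : ℚ) else 0) - (if v = x then (1 : ℚ) else 0))
    (δ₁ : ℝ)
    (hgeo : ∀ (x y : V) (p : X.Walk x y), p.length = X.dist x y →
      ∀ u v : V, (q x y).val u v ≠ 0 →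
        ∃ w ∈ p.support, (X.dist u w : ℝ) ≤ δ₁ ∧ (X.dist v w : ℝ) ≤ δ₁)
    (x y z : V) (hxy : x ≠ y)
    (hz : X.dist x z + X.dist z y = X.dist x y) :
    1 ≤ (∑ᶠ p : V × V,
        if (X.dist p.1 z : ℝ) ≤ 2 * δ₁ + 1 ∧ (X.dist p.2 z : ℝ) ≤ 2 * δ₁ + 1
        then |(q x y).val p.1 p.2| else 0) / 2 := by
  obtain ⟨γ, hγ, hγz⟩ := hconn.exists_geodesic_through hz
  have hxy' : 0 < X.dist x y := hconn.pos_dist_of_ne hxy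
  -- `k ≤ d(x,z) ≤ k + 1` and `k < d(x,y)`: the ball of radius `k` about `x` separates `x` from `y`
  -- and its boundary passes next to `z`.
  set k := min (X.dist x z) (X.dist x y - 1)
  let S : Set V := {v | X.dist x v ≤ k}
  have hcut := (q x y).one_le_sum_abs_cut (S := S) (hbdry x y) hxy
    (by simp [S]) (by simp only [S, Set.mem_ofPred_eq]; omega)
  have hnear : ∀ p ∈ (q x y).cut S,
      (X.dist p.1 z : ℝ) ≤ 2 * δ₁ + 1 ∧ (X.dist p.2 z : ℝ) ≤ 2 * δ₁ + 1 := by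
    intro p hp
    obtain ⟨hpq, hu, hv⟩ := (q x y).mem_cut.1 hp
    simp only [S, Set.mem_ofPred_eq, not_le] at hu hv
    obtain ⟨w, hw, huw, hvw⟩ := hgeo x y γ hγ p.1 p.2 ((q x y).mem_support.1 hpq)
    obtain ⟨huz, hvz⟩ := SimpleGraph.dist_le_two_mul_of_crossing hconn (hγz w hw)
      (min_le_left _ _) (by omega) hu hv huw hvw
    exact ⟨by linarith, by linarith⟩
  have hmass := (q x y).two_mul_sum_abs_cut_le S (fun v => (X.dist v z : ℝ) ≤ 2 * δ₁ + 1) hnear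
  linarith

/-- If `q` is a quasigeodesic bicombing with constant `δ₁` and `z` lies on a
geodesic between `x ≠ y`, then the restriction of `q(x,y)` to the edges within
distance `ρ = 2δ₁ + 1` of `z` has ℓ1-norm at least 1. -/
theorem restricted_l1_ge_one {V : Type*} (X : SimpleGraph V) (hconn : X.Connected)
    (q : V → V → OneChain X)
    (hbdry : ∀ x y v, (q x y).boundary v =
      (if v = y then (1 : ℚ) else 0) - (if v = x then (1 : ℚ) else 0))
    (δ₁ : ℝ) (hδ₁ : 0 ≤ δ₁)
    (hgeo : ∀ (x y : V) (p : X.Walk x y), p.length = X.dist x y →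
      ∀ u v : V, (q x y).val u v ≠ 0 →
        ∃ w ∈ p.support, (X.dist u w : ℝ) ≤ δ₁ ∧ (X.dist v w : ℝ) ≤ δ₁)
    (x y z : V) (hxy : x ≠ y)
    (hz : X.dist x z + X.dist z y = X.dist x y) :
    1 ≤ (∑ᶠ p : V × V,
        if (X.dist p.1 z : ℝ) ≤ 2 * δ₁ + 1 ∧ (X.dist p.2 z : ℝ) ≤ 2 * δ₁ + 1
        then |(q x y).val p.1 p.2| else 0) / 2 :=
  restricted_l1_ge_one_general X hconn q hbdry δ₁ hgeo x y z hxy hz
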